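/- Suppose u is a bounded continuous function on closure(Ω) for Ω ⊂ ℝ^N bounded open, and assume: (i) for all z, z' with z, z' ∈ Ω \ Ω_δ and |z − z'| < δ one has |u(z) − u(z')| ≤ K δ^{β}, for all small δ > 0; and (ii) sup_{Ω_δ}(u_{δ/2} − u) ≤ K δ^{β'} for all small δ > 0, where u_{δ/2}(z) = sup_{|ζ|<δ/2} u(z+ζ) and β' ≤ β. Then u is Hölder continuous on Ω with exponent β': |u(z) − u(z')| ≤ C K |z − z'|^{β'} for all z, z' ∈ Ω with |z−z'| small. -/
import Mathlib


open Metric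

/-- final assembly of Theorem 1.1: if a bounded continuous `u` on
`closure Ω` satisfies (i) the near-boundary oscillation bound
`|u(z) − u(z')| ≤ K δ^β` for `z, z' ∈ Ω \ Ω_δ`, `|z−z'| < δ`, and (ii) the interior
sup-regularization bound `u_{δ/2} − u ≤ K δ^{β'}` on `Ω_δ`, for all small `δ`, with
`β' ≤ β`, then `u` is `β'`-Hölder on `Ω` at small scales. -/
theorem stmt_19 (N : ℕ) (Ω : Set (EuclideanSpace ℝ (Fin N)))
    (hΩo : IsOpen Ω) (hΩb : Bornology.IsBounded Ω)
    (u : EuclideanSpace ℝ (Fin N) → ℝ) (hu : ContinuousOn u (closure Ω))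
    (B : ℝ) (hB : ∀ z ∈ closure Ω, |u z| ≤ B)
    (K β β' : ℝ) (hK : 0 ≤ K) (hβ0 : 0 < β) (hβ1 : β ≤ 1)
    (hβ'0 : 0 < β') (hβ'β : β' ≤ β)
    (δ₀ : ℝ) (hδ₀ : 0 < δ₀)
    (hi : ∀ δ : ℝ, 0 < δ → δ < δ₀ →
      ∀ z ∈ Ω, ∀ z' ∈ Ω,
        infDist z (frontier Ω) ≤ δ → infDist z' (frontier Ω) ≤ δ →
        ‖z - z'‖ < δ → |u z - u z'| ≤ K * δ ^ β)
    (hii : ∀ δ : ℝ, 0 < δ → δ < δ₀ →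
      ∀ z ∈ Ω, δ < infDist z (frontier Ω) →
        ∀ ζ : EuclideanSpace ℝ (Fin N), ‖ζ‖ < δ / 2 →
          u (z + ζ) ≤ u z + K * δ ^ β') :
    ∃ C : ℝ, 0 < C ∧ ∃ η : ℝ, 0 < η ∧
      ∀ z ∈ Ω, ∀ z' ∈ Ω, ‖z - z'‖ < η →
        |u z - u z'| ≤ C * K * ‖z - z'‖ ^ β' := by
  refine ⟨6, by norm_num, min (δ₀ / 6) (1 / 6), by positivity, ?_⟩
  intro z hz z' hz' hzz'
  set d := ‖z - z'‖ with hd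
  have hd0 : 0 ≤ d := norm_nonneg _
  rcases eq_or_lt_of_le hd0 with hd0' | hd0'
  · -- z = z'
    have : z = z' := sub_eq_zero.mp (norm_eq_zero.mp hd0'.symm)
    rw [this, sub_self, abs_zero]
    positivity
  have hβ'1 : β' ≤ 1 := hβ'β.trans hβ1
  have hd6 : d < δ₀ / 6 := lt_of_lt_of_le hzz' (min_le_left _ _)
  have hd16 : d < 1 / 6 := lt_of_lt_of_le hzz' (min_le_right _ _)
  set δ : ℝ := 3 * d with hδ
  have hδpos : 0 < δ := by positivity
  have hdist : dist z z' = d := by rw [dist_eq_norm]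
  by_cases hA : infDist z (frontier Ω) ≤ 2 * δ ∧ infDist z' (frontier Ω) ≤ 2 * δ
  · -- near-boundary case, use (i) at scale 2δ
    have h1 := hi (2 * δ) (by positivity) (by rw [hδ]; linarith) z hz z' hz' hA.1 hA.2
        (by rw [hδ]; linarith)
    have h2 : (2 * δ) ^ β ≤ (2 * δ) ^ β' :=
      Real.rpow_le_rpow_of_exponent_ge (by positivity) (by rw [hδ]; linarith) hβ'β
    have h3 : (2 * δ) ^ β' ≤ 6 * d ^ β' := by
      have : (2 * δ) ^ β' = (6 : ℝ) ^ β' * d ^ β' := by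
        rw [hδ, show (2 : ℝ) * (3 * d) = 6 * d by ring, Real.mul_rpow (by norm_num) hd0]
      rw [this]
      have h6 : (6 : ℝ) ^ β' ≤ 6 := by
        calc (6 : ℝ) ^ β' ≤ (6 : ℝ) ^ (1 : ℝ) :=
              Real.rpow_le_rpow_of_exponent_le (by norm_num) hβ'1
        _ = 6 := Real.rpow_one 6
      exact mul_le_mul_of_nonneg_right h6 (Real.rpow_nonneg hd0 _)
    calc |u z - u z'| ≤ K * (2 * δ) ^ β := h1
      _ ≤ K * (2 * δ) ^ β' := mul_le_mul_of_nonneg_left h2 hK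
      _ ≤ K * (6 * d ^ β') := mul_le_mul_of_nonneg_left h3 hK
      _ = 6 * K * d ^ β' := by ring
  · -- interior case: one of z, z' is deep; then both are δ-deep
    push_neg at hA
    have key : δ < infDist z (frontier Ω) ∧ δ < infDist z' (frontier Ω) := by
      rcases le_or_gt (infDist z (frontier Ω)) (2 * δ) with h | h
      · have h' := hA h
        have := infDist_le_infDist_add_dist (x := z') (y := z) (s := frontier Ω)
        rw [dist_comm, hdist] at this
        constructor <;> [linarith; linarith]
      · have := infDist_le_infDist_add_dist (x := z) (y := z') (s := frontier Ω)
        rw [hdist] at this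
        constructor <;> [linarith; linarith]
    have hδδ₀ : δ < δ₀ := by rw [hδ]; linarith
    have hζ : ‖z' - z‖ < δ / 2 := by
      rw [show ‖z' - z‖ = d by rw [hd, norm_sub_rev]]
      rw [hδ]; linarith
    have hζ' : ‖z - z'‖ < δ / 2 := by rw [← hd] at *; rw [hδ]; linarith
    have e1 := hii δ hδpos hδδ₀ z hz key.1 (z' - z) hζ
    have e2 := hii δ hδpos hδδ₀ z' hz' key.2 (z - z') hζ'
    rw [add_sub_cancel] at e1
    rw [add_sub_cancel] at e2
    have hb : K * δ ^ β' ≤ 6 * K * d ^ β' := by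
      have : δ ^ β' = (3 : ℝ) ^ β' * d ^ β' := by
        rw [hδ, Real.mul_rpow (by norm_num) hd0]
      rw [this]
      have h3 : (3 : ℝ) ^ β' ≤ 6 := by
        calc (3 : ℝ) ^ β' ≤ (3 : ℝ) ^ (1 : ℝ) :=
              Real.rpow_le_rpow_of_exponent_le (by norm_num) hβ'1
        _ = 3 := Real.rpow_one 3
        _ ≤ 6 := by norm_num
      nlinarith [Real.rpow_nonneg hd0 β', mul_le_mul_of_nonneg_right h3 (Real.rpow_nonneg hd0 β')]
    rw [abs_sub_le_iff]
    constructor <;> nlinarith
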